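/- arXiv:1805.09720 — 2 statements merged into one kernel-verified Lean document; each statement's English description precedes it below -/
import Mathlib

section
/- Let H be a real Hilbert space, let r ≥ 1 and let A_i : H → Set H (i = 1,…,r) be set-valued operators. In the product Hilbert space 𝐇 = H^r, let 𝐁(x_1,…,x_r) = A_1(x_1) × ⋯ × A_r(x_r), let 𝐃 = {(x,…,x) | x ∈ H} with canonical embedding j(x) = (x,…,x), and let N_𝐃 be the normal cone operator of 𝐃. Then ran(Id + 𝐁 + N_𝐃) ∩ 𝐃 = {j(x) | x ∈ ran(Id + (1/r)∑_{i=1}^r A_i)}. -/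
open Pointwise Finset

/-- The product operator `𝐁(x₁,…,x_r) = A₁(x₁) × ⋯ × A_r(x_r)` on `H^r`. -/
def prodOp {H : Type*} [NormedAddCommGroup H] [InnerProductSpace ℝ H] {r : ℕ}
    (A : Fin r → H → Set H) (x : Fin r → H) : Set (Fin r → H) :=
  {u | ∀ i, u i ∈ A i (x i)}

/-- The normal cone operator of the diagonal `𝐃 = {(x,…,x) | x ∈ H}` in `H^r`:
`N_𝐃(𝐱) = {𝐮 | ∑ᵢ uᵢ = 0}` if `𝐱 ∈ 𝐃`, and `∅` otherwise. -/
def diagNormalCone {H : Type*} [NormedAddCommGroup H] [InnerProductSpace ℝ H] {r : ℕ}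
    (x : Fin r → H) : Set (Fin r → H) :=
  {u | (∃ z : H, ∀ i, x i = z) ∧ ∑ i, u i = 0}

/-- The range of `Id + A`: `ran(Id + A) = {x + u | x ∈ H, u ∈ A x}`. -/
def ranIdAdd {H : Type*} [AddCommGroup H] (A : H → Set H) : Set H :=
  {y | ∃ x : H, ∃ u ∈ A x, y = x + u}

theorem stmt16 {H : Type*} [NormedAddCommGroup H] [InnerProductSpace ℝ H] [CompleteSpace H]
    (r : ℕ) (hr : 1 ≤ r) (A : Fin r → H → Set H) :
    -- `ran(Id + 𝐁 + N_𝐃) = j(ran(Id + (1/r)∑ᵢ Aᵢ))`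
    ranIdAdd (fun x => prodOp A x + diagNormalCone x)
        ∩ {y : Fin r → H | ∃ z : H, ∀ i, y i = z}
      = (fun p : H => fun _ : Fin r => p) ''
          ranIdAdd (fun x : H => ((r : ℝ)⁻¹) • ∑ i, A i x) := by
  have hr0 : (r : ℝ) ≠ 0 := by positivity
  ext y
  constructor
  · rintro ⟨⟨x, w, hw, rfl⟩, p, hp⟩
    rw [Set.mem_add] at hw
    obtain ⟨u, hu, v, ⟨⟨z, hz⟩, hv⟩, rfl⟩ := hw
    -- x is the constant z function
    have hx : x = fun _ => z := funext hz
    subst hx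
    refine ⟨p, ⟨z, (r : ℝ)⁻¹ • ∑ i, u i, ?_, ?_⟩, ?_⟩
    · exact Set.smul_mem_smul_set (Set.finset_sum_mem_finset_sum _ _ _ (fun i _ => hu i))
    · -- p = z + r⁻¹ • ∑ u i ; use sum over i of hp
      have hsum : ∑ i : Fin r, (z + (u i + v i)) = ∑ _i : Fin r, p :=
        Finset.sum_congr rfl fun i _ => hp i
      simp only [Finset.sum_add_distrib, hv, add_zero, Finset.sum_const, Finset.card_univ,
        Fintype.card_fin] at hsum
      have : (r : ℝ) • z + ∑ i, u i = (r : ℝ) • p := by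
        rw [Nat.cast_smul_eq_nsmul, Nat.cast_smul_eq_nsmul]; exact hsum
      have := congrArg (fun w => (r : ℝ)⁻¹ • w) this
      simpa [smul_smul, inv_mul_cancel₀ hr0, smul_add] using this.symm
    · funext i; exact (hp i).symm
  · rintro ⟨p, ⟨z, w, hw, rfl⟩, rfl⟩
    obtain ⟨s, hs, rfl⟩ := hw
    rw [Set.mem_fintype_sum] at hs
    obtain ⟨u, hu, rfl⟩ := hs
    refine ⟨⟨fun _ => z, u + fun i => ((r : ℝ)⁻¹ • ∑ j, u j - u i), ?_, ?_⟩, ⟨z + (r:ℝ)⁻¹ • ∑ j, u j, fun i => rfl⟩⟩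
    · rw [Set.mem_add]
      refine ⟨u, hu, fun i => (r : ℝ)⁻¹ • ∑ j, u j - u i, ⟨⟨z, fun _ => rfl⟩, ?_⟩, rfl⟩
      rw [Finset.sum_sub_distrib, Finset.sum_const, Finset.card_univ, Fintype.card_fin,
        ← Nat.cast_smul_eq_nsmul ℝ, smul_smul, mul_inv_cancel₀ hr0, one_smul, sub_self]
    · funext i
      simp only [Pi.add_apply]
      abel
end

section
/- Let H be a real Hilbert space, let A_i : H → Set H (i = 1,…,r) be set-valued operators and let β ∈ (0,1). Then the set of zeros of the sum of the β-strengthenings satisfies zer(∑_{i=1}^r A_i^{(β)}) = β • J_{(1/(r(1−β))) ∑_{i=1}^r A_i}(0) = {β • y | 0 − y ∈ (1/(r(1−β))) • (A_1 y + ⋯ + A_r y)}. Consequently, zer(∑_{i=1}^r A_i^{(β)}) ≠ ∅ if and only if 0 ∈ ran(Id + (1/(r(1−β))) ∑_{i=1}^r A_i). -/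
open Pointwise Finset

/-- The `β`-strengthening of `A`: `A^{(β)}(x) = {u + ((1−β)/β) • x | u ∈ A(β⁻¹ • x)}`. -/
def strengthening {H : Type*} [NormedAddCommGroup H] [InnerProductSpace ℝ H]
    (A : H → Set H) (β : ℝ) (x : H) : Set H :=
  {v | ∃ u ∈ A (β⁻¹ • x), v = u + ((1 - β) / β) • x}

theorem stmt18 {H : Type*} [NormedAddCommGroup H] [InnerProductSpace ℝ H] [CompleteSpace H]
    (r : ℕ) (hr : 1 ≤ r) (A : Fin r → H → Set H)
    (β : ℝ) (hβ : β ∈ Set.Ioo (0 : ℝ) 1) :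
    -- `zer(∑ᵢ Aᵢ^{(β)}) = β • J_{(1/(r(1−β)))∑ᵢAᵢ}(0)`
    {x : H | (0 : H) ∈ ∑ i, strengthening (A i) β x}
        = β • {y : H | (0 : H) - y ∈ (1 / ((r : ℝ) * (1 - β))) • ∑ i, A i y} ∧
    -- consequently, `zer(∑ᵢ Aᵢ^{(β)}) ≠ ∅ ↔ 0 ∈ ran(Id + (1/(r(1−β)))∑ᵢAᵢ)`
    ({x : H | (0 : H) ∈ ∑ i, strengthening (A i) β x}.Nonempty
        ↔ (0 : H) ∈ ranIdAdd (fun x : H => (1 / ((r : ℝ) * (1 - β))) • ∑ i, A i x)) := by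
  obtain ⟨hβ0, hβ1⟩ := hβ
  have hβne : β ≠ 0 := ne_of_gt hβ0
  have hrR : (0:ℝ) < (r:ℝ) := by exact_mod_cast Nat.lt_of_lt_of_le Nat.zero_lt_one hr
  have h1β : (0:ℝ) < 1 - β := by linarith
  set c : ℝ := 1 / ((r : ℝ) * (1 - β)) with hc
  have hcs : c * ((r:ℝ) * (1 - β)) = 1 := by
    rw [hc]; field_simp
  have hsc : ((r:ℝ) * (1 - β)) * c = 1 := by rw [mul_comm]; exact hcs
  have hkey : ∀ y : H, ((0 : H) ∈ ∑ i, strengthening (A i) β (β • y)) ↔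
      ((0 : H) - y ∈ c • ∑ i, A i y) := by
    intro y
    have hrw : (r : ℝ) • (((1 - β) / β) • (β • y)) = ((r:ℝ) * (1 - β)) • y := by
      rw [smul_smul, smul_smul]; congr 1; field_simp
    have hiff : ∀ v : H, v + (r : ℝ) • (((1 - β) / β) • (β • y)) = 0 ↔
        c • v = 0 - y := by
      intro v
      rw [hrw, zero_sub]
      constructor
      · intro h
        rw [eq_neg_of_add_eq_zero_left h, smul_neg, smul_smul, hcs, one_smul]
      · intro h
        have hv : v = ((r:ℝ) * (1 - β)) • (c • v) := by
          rw [smul_smul, hsc, one_smul]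
        rw [hv, h, smul_neg, neg_add_cancel]
    rw [Set.mem_fintype_sum, Set.mem_smul_set]
    constructor
    · rintro ⟨g, hg, hsum⟩
      choose u hu hgu using fun i => hg i
      refine ⟨∑ i, u i, ?_, ?_⟩
      · exact Set.finset_sum_mem_finset_sum Finset.univ _ _ fun i _ => by
          simpa [inv_smul_smul₀ hβne] using hu i
      · refine (hiff _).mp ?_
        rw [← hsum]
        rw [show ∑ i, g i = ∑ i, (u i + ((1 - β) / β) • (β • y)) from
          Finset.sum_congr rfl fun i _ => hgu i]
        rw [Finset.sum_add_distrib, Finset.sum_const, Finset.card_univ, Fintype.card_fin,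
          ← Nat.cast_smul_eq_nsmul ℝ]
    · rintro ⟨v, hv, hyv⟩
      rw [Set.mem_fintype_sum] at hv
      obtain ⟨u, hu, hsum⟩ := hv
      refine ⟨fun i => u i + ((1 - β) / β) • (β • y), fun i => ?_, ?_⟩
      · exact ⟨u i, by simpa [inv_smul_smul₀ hβne] using hu i, rfl⟩
      · rw [Finset.sum_add_distrib, Finset.sum_const, Finset.card_univ, Fintype.card_fin,
          ← Nat.cast_smul_eq_nsmul ℝ, hsum]
        exact (hiff v).mpr hyv
  have hEq : {x : H | (0 : H) ∈ ∑ i, strengthening (A i) β x}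
      = β • {y : H | (0 : H) - y ∈ c • ∑ i, A i y} := by
    ext x
    rw [Set.mem_smul_set_iff_inv_smul_mem₀ hβne, Set.mem_setOf_eq, Set.mem_setOf_eq]
    have := hkey (β⁻¹ • x)
    rwa [smul_inv_smul₀ hβne] at this
  refine ⟨hEq, ?_⟩
  rw [hEq]
  constructor
  · rintro ⟨x, hx⟩
    rw [Set.mem_smul_set] at hx
    obtain ⟨y, hy, rfl⟩ := hx
    exact ⟨y, 0 - y, hy, by abel⟩
  · rintro ⟨x, u, hu, hxu⟩
    have hux : u = 0 - x := by
      rw [zero_sub]; exact (eq_neg_of_add_eq_zero_right hxu.symm)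
    refine ⟨β • x, Set.smul_mem_smul_set ?_⟩
    rw [Set.mem_setOf_eq, ← hux]
    exact hu
end
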